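/- arXiv:1903.01165 — 5 statements merged into one kernel-verified Lean document; each statement's English description precedes it below -/
import Mathlib

section
/- Let G be a finite simple graph with vertex set V of size n, let p : V → [0,1] be reliabilities, and let x ∈ V. Then the Shapley value of x in the reliability extension of the network centrality game Γ_{NC1} satisfies Sh[v̄_{NC1}](x) = p_x · Σ_{y ∈ N̂(x)} Σ_{S ⊆ N̂(y)∖{x}} (1/(|S|+1)) · Π_{S, N̂(y)∖{x}}(p). -/
open Finset

attribute [local instance] Classical.propDecidable

noncomputable section

/-- `Π_{T,S}(p) = (∏_{i∈T} p i) * (∏_{i∈S\T} (1 - p i))`. -/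
def prodPi {α : Type*} (p : α → ℝ) (T S : Finset α) : ℝ :=
  (∏ i ∈ T, p i) * (∏ i ∈ S \ T, (1 - p i))

/-- Reliability extension of a TU-game. -/
def relExt {α : Type*} (p : α → ℝ) (v : Finset α → ℝ) (S : Finset α) : ℝ :=
  ∑ T ∈ S.powerset, v T * prodPi p T S

/-- The set of players preceding `x` in the ordering `σ`. -/
def precedingSet {α : Type*} [Fintype α] (σ : Fin (Fintype.card α) ≃ α) (x : α) : Finset α :=
  Finset.univ.filter fun y => σ.symm y < σ.symm x

/-- The Shapley value of player `x` in the TU-game `v`. -/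
def shapley {α : Type*} [Fintype α] (v : Finset α → ℝ) (x : α) : ℝ :=
  (1 / ((Fintype.card α).factorial : ℝ)) *
    ∑ σ : Fin (Fintype.card α) ≃ α,
      (v (insert x (precedingSet σ x)) - v (precedingSet σ x))

/-- The (open) neighborhood of `v` as a finset. -/
def nbhd {α : Type*} [Fintype α] (G : SimpleGraph α) (v : α) : Finset α :=
  Finset.univ.filter fun y => G.Adj v y

/-- `N̂(v) = {v} ∪ N(v)`. -/
def closedNbhd {α : Type*} [Fintype α] (G : SimpleGraph α) (v : α) : Finset α :=
  insert v (nbhd G v)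

/-- `δ(S)`: vertices outside `S` having a neighbor in `S`. -/
def extBoundary {α : Type*} [Fintype α] (G : SimpleGraph α) (S : Finset α) : Finset α :=
  Finset.univ.filter fun y => y ∉ S ∧ ∃ x ∈ S, G.Adj x y

/-- The network centrality game `Γ_{NC1}`: `v(S) = |S ∪ δ(S)|`. -/
def vNC1 {α : Type*} [Fintype α] (G : SimpleGraph α) (S : Finset α) : ℝ :=
  ((S ∪ extBoundary G S).card : ℝ)

/-! `v_{NC1}(W)` counts the vertices `y` whose closed neighbourhood `N̂(y)` meets `W`, so it is a
sum of the simple games "`W` meets `N̂(y)`", and the reliability extension is linear in the game.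
For such a game the extension at `T` is `1 - ∏_{T ∩ N̂(y)} (1 - p)`, so the marginal contribution
of `x ∉ T` is `p x * ∏_{(N̂(y) ∖ {x}) ∩ T} (1 - p)` when `x ∈ N̂(y)`, and `0` otherwise.
Expanding that product as the total weight `Π_{S, N̂(y) ∖ {x}}` of the sets `S` disjoint from
`T`, the Shapley average over orderings reduces, for each `S`, to the probability that `x`
precedes every player of `S`, which is `1 / (|S| + 1)`. -/

lemma sum_prodPi_filter_disjoint {α : Type*} (p : α → ℝ) (A C : Finset α) :
    ∑ S ∈ A.powerset with Disjoint S C, prodPi p S A = ∏ i ∈ A ∩ C, (1 - p i) := by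
  -- expand `∏ i ∈ A, (p' i + (1 - p i))`, where `p'` is `p` set to zero on `C`
  have h := Finset.prod_add (fun i => if i ∈ C then 0 else p i) (fun i => 1 - p i) A
  have hlhs : ∀ i ∈ A, ((if i ∈ C then 0 else p i) + (1 - p i)) = if i ∈ C then 1 - p i else 1 :=
    fun i _ => by split_ifs <;> ring
  rw [Finset.prod_congr rfl hlhs, Finset.prod_ite_mem] at h
  rw [h, Finset.sum_filter]
  refine Finset.sum_congr rfl fun S _ => ?_
  simp only [prodPi, Finset.disjoint_left, ← ite_not (_ ∈ C), Finset.prod_ite_zero]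
  split_ifs <;> simp

lemma sum_prodPi_powerset {α : Type*} (p : α → ℝ) (A : Finset α) :
    ∑ S ∈ A.powerset, prodPi p S A = 1 := by
  simpa using sum_prodPi_filter_disjoint p A ∅

lemma relExt_sum {α ι : Type*} (p : α → ℝ) (s : Finset ι) (v : ι → Finset α → ℝ) (T : Finset α) :
    relExt p (fun W => ∑ i ∈ s, v i W) T = ∑ i ∈ s, relExt p (v i) T := by
  simp only [relExt, Finset.sum_mul]
  exact Finset.sum_comm

def meetsGame {α : Type*} (B W : Finset α) : ℝ :=
  if Disjoint W B then 0 else 1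

lemma relExt_meetsGame {α : Type*} (p : α → ℝ) (B T : Finset α) :
    relExt p (meetsGame B) T = 1 - ∏ i ∈ T ∩ B, (1 - p i) := by
  rw [← sum_prodPi_filter_disjoint, ← sum_prodPi_powerset p T, Finset.sum_filter,
    ← Finset.sum_sub_distrib, relExt]
  refine Finset.sum_congr rfl fun W _ => ?_
  unfold meetsGame
  split_ifs <;> ring

lemma relExt_meetsGame_insert_sub {α : Type*} (p : α → ℝ) (B T : Finset α) {x : α}
    (hx : x ∉ T) :
    relExt p (meetsGame B) (insert x T) - relExt p (meetsGame B) T =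
      if x ∈ B then p x * ∏ i ∈ B.erase x ∩ T, (1 - p i) else 0 := by
  simp only [relExt_meetsGame]
  split_ifs with hxB
  · have hT : B.erase x ∩ T = T ∩ B := by
      rw [Finset.erase_inter, Finset.erase_eq_of_notMem fun h => hx (Finset.mem_inter.1 h).2,
        Finset.inter_comm]
    rw [Finset.insert_inter_of_mem hxB, Finset.prod_insert (fun h => hx (Finset.mem_inter.1 h).1),
      hT]
    ring
  · rw [Finset.insert_inter_of_notMem hxB, sub_self]

lemma mem_closedNbhd {α : Type*} [Fintype α] {G : SimpleGraph α} {y z : α} :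
    z ∈ closedNbhd G y ↔ z = y ∨ G.Adj y z := by
  simp [closedNbhd, nbhd]

lemma mem_closedNbhd_comm {α : Type*} [Fintype α] {G : SimpleGraph α} {y z : α} :
    z ∈ closedNbhd G y ↔ y ∈ closedNbhd G z := by
  simp only [mem_closedNbhd, eq_comm, G.adj_comm]

lemma mem_union_extBoundary {α : Type*} [Fintype α] (G : SimpleGraph α) (W : Finset α) (y : α) :
    y ∈ W ∪ extBoundary G W ↔ ¬ Disjoint W (closedNbhd G y) := by
  simp only [Finset.not_disjoint_iff, mem_union, extBoundary, mem_filter, mem_univ, true_and,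
    mem_closedNbhd, G.adj_comm y]
  constructor
  · rintro (hy | ⟨-, z, hz, hzy⟩)
    exacts [⟨y, hy, Or.inl rfl⟩, ⟨z, hz, Or.inr hzy⟩]
  · rintro ⟨z, hz, rfl | hzy⟩
    · exact Or.inl hz
    · by_cases hy : y ∈ W
      exacts [Or.inl hy, Or.inr ⟨hy, z, hz, hzy⟩]

lemma vNC1_eq_sum_meetsGame {α : Type*} [Fintype α] (G : SimpleGraph α) (W : Finset α) :
    vNC1 G W = ∑ y, meetsGame (closedNbhd G y) W := by
  have hW : W ∪ extBoundary G W = univ.filter fun y => ¬ Disjoint W (closedNbhd G y) := by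
    ext y
    rw [mem_union_extBoundary]
    simp
  rw [vNC1, hW, ← Finset.sum_boole]
  exact Finset.sum_congr rfl fun y _ => ite_not _ _ _

lemma relExt_vNC1_insert_sub {α : Type*} [Fintype α] (G : SimpleGraph α) (p : α → ℝ)
    {x : α} {T : Finset α} (hx : x ∉ T) :
    relExt p (vNC1 G) (insert x T) - relExt p (vNC1 G) T =
      p x * ∑ y ∈ closedNbhd G x, ∏ i ∈ (closedNbhd G y).erase x ∩ T, (1 - p i) := by
  have hv : vNC1 G = fun W => ∑ y, meetsGame (closedNbhd G y) W :=
    funext (vNC1_eq_sum_meetsGame G)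
  simp only [hv, relExt_sum, ← Finset.sum_sub_distrib, relExt_meetsGame_insert_sub _ _ _ hx,
    ← Finset.sum_filter, Finset.mul_sum]
  congr 1
  ext y
  simp [mem_closedNbhd_comm]

section Orderings

variable {ι α : Type*} [LinearOrder ι]

def IsFirstIn (σ : ι ≃ α) (T : Finset α) (s : α) : Prop :=
  ∀ u ∈ T, σ.symm s ≤ σ.symm u

lemma IsFirstIn.trans_swap [DecidableEq α] {σ : ι ≃ α} {T : Finset α} {s t : α}
    (hσ : IsFirstIn σ T s) (hs : s ∈ T) (ht : t ∈ T) :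
    IsFirstIn (σ.trans (Equiv.swap s t)) T t := by
  intro u hu
  simp only [Equiv.symm_trans_apply, Equiv.symm_swap, Equiv.swap_apply_right]
  refine hσ _ ?_
  rw [Equiv.swap_apply_def]
  split_ifs <;> assumption

lemma card_filter_isFirstIn_eq [Fintype ι] [DecidableEq ι] [Fintype α] [DecidableEq α]
    {T : Finset α} {s t : α} (hs : s ∈ T) (ht : t ∈ T) :
    #{σ : ι ≃ α | IsFirstIn σ T s} = #{σ : ι ≃ α | IsFirstIn σ T t} := by
  have hinv : ∀ σ : ι ≃ α, (σ.trans (Equiv.swap s t)).trans (Equiv.swap t s) = σ := fun σ => by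
    rw [Equiv.swap_comm, Equiv.trans_assoc, Equiv.swap_swap, Equiv.trans_refl]
  refine Finset.card_nbij' (fun σ => σ.trans (Equiv.swap s t)) (fun σ => σ.trans (Equiv.swap t s))
    ?_ ?_ (fun σ _ => hinv σ) (fun σ _ => by simpa [Equiv.swap_comm] using hinv σ)
  · intro σ hσ
    simp only [coe_filter, mem_univ, true_and, Set.mem_ofPred_eq] at hσ ⊢
    exact hσ.trans_swap hs ht
  · intro σ hσ
    simp only [coe_filter, mem_univ, true_and, Set.mem_ofPred_eq] at hσ ⊢
    exact hσ.trans_swap ht hs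

/-- The orderings are partitioned according to which player of `T` comes first, and the parts
have equal sizes. -/
lemma card_filter_isFirstIn_mul_card [Fintype ι] [DecidableEq ι] [Fintype α] [DecidableEq α]
    {T : Finset α} {x : α} (hx : x ∈ T) :
    #{σ : ι ≃ α | IsFirstIn σ T x} * #T = Nat.card (ι ≃ α) := by
  have hcover : (univ : Finset (ι ≃ α)) =
      T.biUnion fun s => ({σ | IsFirstIn σ T s} : Finset (ι ≃ α)) := by
    ext σ
    obtain ⟨s, hs, hmin⟩ := T.exists_min_image σ.symm ⟨x, hx⟩
    simpa using ⟨s, hs, hmin⟩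
  have hdisj : (T : Set α).PairwiseDisjoint
      fun s => ({σ | IsFirstIn σ T s} : Finset (ι ≃ α)) := by
    intro a ha b hb hab
    refine Finset.disjoint_left.2 fun σ hσa hσb => hab ?_
    simp only [mem_filter, mem_univ, true_and] at hσa hσb
    exact σ.symm.injective (le_antisymm (hσa b hb) (hσb a ha))
  calc #{σ : ι ≃ α | IsFirstIn σ T x} * #T
      = ∑ s ∈ T, #{σ : ι ≃ α | IsFirstIn σ T s} := by
        rw [Finset.sum_congr rfl fun s hs => card_filter_isFirstIn_eq hs hx, Finset.sum_const,
          smul_eq_mul, mul_comm]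
    _ = Nat.card (ι ≃ α) := by
        rw [← Finset.card_biUnion hdisj, ← hcover, Finset.card_univ, Nat.card_eq_fintype_card]

end Orderings

lemma disjoint_precedingSet_iff {α : Type*} [Fintype α] {σ : Fin (Fintype.card α) ≃ α}
    {S : Finset α} {x : α} :
    Disjoint S (precedingSet σ x) ↔ IsFirstIn σ (insert x S) x := by
  simp [IsFirstIn, precedingSet, Finset.disjoint_left]

lemma card_filter_disjoint_precedingSet {α : Type*} [Fintype α] {S : Finset α} {x : α}
    (hx : x ∉ S) :
    (#{σ : Fin (Fintype.card α) ≃ α | Disjoint S (precedingSet σ x)} : ℝ) =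
      (Fintype.card α).factorial / (#S + 1) := by
  have h := card_filter_isFirstIn_mul_card (ι := Fin (Fintype.card α)) (mem_insert_self x S)
  rw [Finset.card_insert_of_notMem hx,
    Nat.card_congr (Equiv.equivCongr (Fintype.equivFin α).symm (Equiv.refl α)), Nat.card_perm,
    Nat.card_eq_fintype_card] at h
  have hfilter : ({σ | Disjoint S (precedingSet σ x)} : Finset (Fin (Fintype.card α) ≃ α)) =
      ({σ | IsFirstIn σ (insert x S) x} : Finset _) := by
    simp only [disjoint_precedingSet_iff]
  rw [hfilter, eq_div_iff (by positivity)]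
  exact_mod_cast h

lemma average_prod_inter_precedingSet {α : Type*} [Fintype α] (p : α → ℝ) {A : Finset α}
    {x : α} (hx : x ∉ A) :
    1 / ((Fintype.card α).factorial : ℝ) *
        ∑ σ : Fin (Fintype.card α) ≃ α, ∏ i ∈ A ∩ precedingSet σ x, (1 - p i) =
      ∑ S ∈ A.powerset, (1 / (#S + 1) : ℝ) * prodPi p S A := by
  simp only [← sum_prodPi_filter_disjoint, Finset.sum_filter]
  rw [Finset.sum_comm, Finset.mul_sum]
  refine Finset.sum_congr rfl fun S hS => ?_
  have hxS : x ∉ S := fun h => hx (Finset.mem_powerset.1 hS h)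
  rw [← Finset.sum_filter, Finset.sum_const, nsmul_eq_mul, card_filter_disjoint_precedingSet hxS]
  field_simp

theorem stmt_2_general {α : Type*} [Fintype α] [DecidableEq α] (G : SimpleGraph α)
    (p : α → ℝ) (x : α) :
    shapley (relExt p (vNC1 G)) x =
      p x * ∑ y ∈ closedNbhd G x, ∑ S ∈ ((closedNbhd G y).erase x).powerset,
        (1 / (S.card + 1) : ℝ) * prodPi p S ((closedNbhd G y).erase x) := by
  -- the definitions above decide equality classically
  obtain rfl : ‹DecidableEq α› = fun a b => Classical.propDecidable (a = b) :=
    Subsingleton.elim _ _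
  have hmarg : ∀ σ : Fin (Fintype.card α) ≃ α,
      relExt p (vNC1 G) (insert x (precedingSet σ x)) - relExt p (vNC1 G) (precedingSet σ x) =
        p x * ∑ y ∈ closedNbhd G x,
          ∏ i ∈ (closedNbhd G y).erase x ∩ precedingSet σ x, (1 - p i) :=
    fun σ => relExt_vNC1_insert_sub G p (by simp [precedingSet])
  rw [shapley, Finset.sum_congr rfl fun σ _ => hmarg σ, ← Finset.mul_sum, Finset.sum_comm,
    mul_left_comm, Finset.mul_sum]
  exact congrArg _ (Finset.sum_congr rfl fun y _ =>
    average_prod_inter_precedingSet p (Finset.notMem_erase x _))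

theorem stmt_2 {α : Type*} [Fintype α] [DecidableEq α] (G : SimpleGraph α)
    (p : α → ℝ) (hp : ∀ i, p i ∈ Set.Icc (0 : ℝ) 1) (x : α) :
    shapley (relExt p (vNC1 G)) x =
      p x * ∑ y ∈ closedNbhd G x, ∑ S ∈ ((closedNbhd G y).erase x).powerset,
        (1 / (S.card + 1) : ℝ) * prodPi p S ((closedNbhd G y).erase x) :=
  stmt_2_general G p x

end
end

section
/- In a credit-attribution setting with reliabilities p : N → [0,1], for every author x the Shapley value of x in the reliability extension of the full credit game satisfies Sh[v̄_{FC}](x) = p_x · Σ_{k ∈ Pap_x} w_k · Σ_{S ⊆ Auth_k∖{x}} ( ∏_{i∈S}(1−p_i) ) / ( (n_k − |S|) · binom(n_k, |S|) ). -/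
open Finset

attribute [local instance] Classical.propDecidable

noncomputable section

/-- `Pap x`: the papers having `x` among their authors. -/
def Pap {α β : Type*} [Fintype β] (Auth : β → Finset α) (x : α) : Finset β :=
  Finset.univ.filter fun k => x ∈ Auth k

/-- The full credit game. -/
def vFC {α β : Type*} [Fintype β] (Auth : β → Finset α) (w : β → ℝ) (S : Finset α) : ℝ :=
  ∑ k ∈ Finset.univ.filter (fun k => (Auth k ∩ S).Nonempty), w k

/-- The full obligation game. -/
def vFO {α β : Type*} [Fintype β] (Auth : β → Finset α) (w : β → ℝ) (S : Finset α) : ℝ :=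
  ∑ k ∈ Finset.univ.filter (fun k => Auth k ⊆ S), w k

/-!
The reliability extension of the full credit game is
`v̄(S) = ∑ₖ wₖ (1 - ∏_{i ∈ Authₖ ∩ S} (1 - pᵢ))`, so the marginal contribution of `x` to the set `S`
of its predecessors is `pₓ ∑_{k ∈ Papₓ} wₖ ∏_{i ∈ Authₖ ∩ S} (1 - pᵢ)`. For each paper it remains
to count the orderings in which the coauthors preceding `x` form a given set `S`. By symmetry,
every pair `(y, S)` with `y ∈ Authₖ` and `S ⊆ Authₖ \ {y}` of a fixed size `s` occurs in equally
many orderings, and each ordering realizes exactly one such pair (its member of `Authₖ` at relative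
position `s`). There are `nₖ * (nₖ - 1).choose s = (nₖ - s) * nₖ.choose s` pairs.
-/

section Reliability
variable {α β : Type*} [Fintype β]

lemma relExt_prod (p f : α → ℝ) (S : Finset α) :
    relExt p (fun T => ∏ i ∈ T, f i) S = ∏ i ∈ S, (f i * p i + (1 - p i)) := by
  simp only [relExt, prodPi, prod_add, prod_mul_distrib, mul_assoc]

lemma vFC_eq_sum_one_sub_prod (Auth : β → Finset α) (w : β → ℝ) (T : Finset α) :
    vFC Auth w T = ∑ k, w k * (1 - ∏ i ∈ T, if i ∈ Auth k then 0 else 1) := by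
  rw [vFC, sum_filter]
  refine sum_congr rfl fun k _ => ?_
  split_ifs with h
  · obtain ⟨i, hi⟩ := h
    rw [mem_inter] at hi
    rw [prod_eq_zero hi.2 (by simp [hi.1]), sub_zero, mul_one]
  · rw [not_nonempty_iff_eq_empty, ← disjoint_iff_inter_eq_empty] at h
    rw [prod_eq_one fun i hi => if_neg (disjoint_right.mp h hi), sub_self, mul_zero]

lemma relExt_vFC (Auth : β → Finset α) (w : β → ℝ) (p : α → ℝ) (S : Finset α) :
    relExt p (vFC Auth w) S = ∑ k, w k * (1 - ∏ i ∈ Auth k ∩ S, (1 - p i)) := by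
  have hone : relExt p (fun _ => 1) S = 1 := by simpa using relExt_prod p 1 S
  have havoid (k) : relExt p (fun T => ∏ i ∈ T, if i ∈ Auth k then 0 else 1) S
      = ∏ i ∈ Auth k ∩ S, (1 - p i) := by
    rw [relExt_prod, inter_comm, ← prod_ite_mem]
    exact prod_congr rfl fun i _ => by split_ifs <;> ring
  calc relExt p (vFC Auth w) S
      = ∑ k, w k * (relExt p (fun _ => 1) S
          - relExt p (fun T => ∏ i ∈ T, if i ∈ Auth k then 0 else 1) S) := by
        simp only [relExt, vFC_eq_sum_one_sub_prod, sum_mul]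
        rw [sum_comm]
        refine sum_congr rfl fun k _ => ?_
        rw [mul_sub, mul_sum, mul_sum, ← sum_sub_distrib]
        exact sum_congr rfl fun T _ => by ring
    _ = _ := by simp only [hone, havoid]

lemma relExt_vFC_insert_sub (Auth : β → Finset α) (w : β → ℝ) (p : α → ℝ) {S : Finset α}
    {x : α} (hx : x ∉ S) :
    relExt p (vFC Auth w) (insert x S) - relExt p (vFC Auth w) S
      = ∑ k ∈ Pap Auth x, w k * (p x * ∏ i ∈ Auth k ∩ S, (1 - p i)) := by
  rw [relExt_vFC, relExt_vFC, ← sum_sub_distrib, Pap, sum_filter]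
  refine sum_congr rfl fun k _ => ?_
  split_ifs with hk
  · rw [inter_insert_of_mem hk, prod_insert fun h => hx (mem_inter.mp h).2]
    ring
  · rw [inter_insert_of_notMem hk, sub_self]

end Reliability

open Function in
lemma exists_perm_map_eq_of_pairwise_disjoint {α ι : Type*} [Finite ι]
    (s t : ι → Finset α) (hs : Pairwise (Disjoint on s)) (ht : Pairwise (Disjoint on t))
    (hcard : ∀ i, #(s i) = #(t i)) :
    ∃ τ : Equiv.Perm α, ∀ i, (s i).map τ.toEmbedding = t i := by
  let e i := (s i).equivOfCardEq (hcard i)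
  have inj {u : ι → Finset α} (hu : Pairwise (Disjoint on u)) :
      Function.Injective fun a : Σ i, u i => (a.2 : α) := by
    rintro ⟨i, a, ha⟩ ⟨j, b, hb⟩ (rfl : a = b)
    obtain rfl : i = j := by_contra fun hij => disjoint_left.mp (hu hij) ha hb
    rfl
  obtain ⟨τ, hτ⟩ := Equiv.Perm.exists_extending_pair _ _ (inj hs)
    ((inj ht).comp (injective_id.sigma_map fun i => (e i).injective))
  refine ⟨τ, fun i => eq_of_subset_of_card_le (fun b hb => ?_) (by simp [hcard])⟩
  obtain ⟨a, ha, rfl⟩ := mem_map.mp hb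
  simpa using (hτ ⟨i, a, ha⟩).symm ▸ (e i ⟨a, ha⟩).2

open Function in
lemma exists_perm_map_eq_of_card_eq {α : Type*} [DecidableEq α] {B S S' : Finset α} {y y' : α}
    (hy : y ∈ B) (hy' : y' ∈ B) (hS : S ⊆ B.erase y) (hS' : S' ⊆ B.erase y') (hcard : #S = #S') :
    ∃ τ : Equiv.Perm α, B.map τ.toEmbedding = B ∧ S.map τ.toEmbedding = S' ∧ τ y = y' := by
  have hyS {S y} (hS : S ⊆ B.erase y) : y ∉ S := fun h => by simpa using hS h
  have hsub {S y} (hy : y ∈ B) (hS : S ⊆ B.erase y) : insert y S ⊆ B :=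
    insert_subset hy (hS.trans (erase_subset y B))
  have hpart {S y} (hy : y ∈ B) (hS : S ⊆ B.erase y) :
      Pairwise (Disjoint on ![S, {y}, B \ insert y S]) := by
    intro i j hij
    fin_cases i <;> fin_cases j <;> simp_all [Function.onFun, disjoint_left, hyS hS]
  have hsdiff {S y} (hy : y ∈ B) (hS : S ⊆ B.erase y) : #(B \ insert y S) = #B - #S - 1 := by
    rw [card_sdiff_of_subset (hsub hy hS), card_insert_of_notMem (hyS hS)]
    omega
  have hparts : ∀ i, #(![S, {y}, B \ insert y S] i) = #(![S', {y'}, B \ insert y' S'] i) := by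
    intro i
    fin_cases i <;> simp [hcard, hsdiff hy hS, hsdiff hy' hS']
  obtain ⟨τ, hτ⟩ := exists_perm_map_eq_of_pairwise_disjoint _ _ (hpart hy hS) (hpart hy' hS')
    hparts
  have hS_map : S.map τ.toEmbedding = S' := hτ 0
  have hy_map : τ y = y' := by simpa using hτ 1
  have hrest_map : (B \ insert y S).map τ.toEmbedding = B \ insert y' S' := hτ 2
  refine ⟨τ, ?_, hS_map, hy_map⟩
  calc B.map τ.toEmbedding = (insert y S ∪ B \ insert y S).map τ.toEmbedding := by
        rw [union_sdiff_of_subset (hsub hy hS)]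
    _ = insert y' S' ∪ B \ insert y' S' := by
        rw [map_union, map_insert, hS_map, hrest_map, Equiv.coe_toEmbedding, hy_map]
    _ = B := union_sdiff_of_subset (hsub hy' hS')

section Orderings
variable {α : Type*} [Fintype α]

lemma notMem_precedingSet (σ : Fin (Fintype.card α) ≃ α) (x : α) :
    x ∉ precedingSet σ x := by
  simp [precedingSet]

lemma precedingSet_trans (σ : Fin (Fintype.card α) ≃ α) (τ : Equiv.Perm α) (y : α) :
    precedingSet (σ.trans τ) (τ y) = (precedingSet σ y).map τ.toEmbedding := by
  ext z
  simp [precedingSet, mem_map_equiv]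

variable [DecidableEq α]

lemma card_inter_precedingSet_lt {B : Finset α} {σ : Fin (Fintype.card α) ≃ α} {y z : α}
    (hy : y ∈ B) (h : σ.symm y < σ.symm z) :
    #(B ∩ precedingSet σ y) < #(B ∩ precedingSet σ z) := by
  refine card_lt_card ⟨fun i hi => ?_, fun hsub => ?_⟩
  · simp only [precedingSet, mem_inter, mem_filter, mem_univ, true_and] at hi ⊢
    exact ⟨hi.1, hi.2.trans h⟩
  · exact notMem_precedingSet σ y (mem_inter.mp (hsub (by simpa [precedingSet] using ⟨hy, h⟩))).2

lemma card_filter_card_inter_precedingSet_eq_one (σ : Fin (Fintype.card α) ≃ α) {B : Finset α}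
    {s : ℕ} (hs : s < #B) :
    #{y ∈ B | #(B ∩ precedingSet σ y) = s} = 1 := by
  set r := fun y => #(B ∩ precedingSet σ y)
  have hinj : Set.InjOn r B := by
    intro y hy z hz hyz
    by_contra hne
    rcases lt_or_gt_of_ne (σ.symm.injective.ne hne) with h | h
    · exact (card_inter_precedingSet_lt hy h).ne hyz
    · exact (card_inter_precedingSet_lt hz h).ne' hyz
  have himage : B.image r = range #B := by
    refine eq_of_subset_of_card_le (fun n hn => ?_) (by simp [card_image_of_injOn hinj])
    obtain ⟨y, hy, rfl⟩ := mem_image.mp hn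
    refine mem_range.mpr (card_lt_card ⟨inter_subset_left, fun hsub => ?_⟩)
    exact notMem_precedingSet σ y (mem_inter.mp (hsub hy)).2
  obtain ⟨y, hy, hys⟩ := mem_image.mp (himage ▸ mem_range.mpr hs)
  refine card_eq_one.mpr ⟨y, eq_singleton_iff_unique_mem.mpr ⟨mem_filter.mpr ⟨hy, hys⟩, ?_⟩⟩
  intro z hz
  exact hinj (mem_filter.mp hz).1 hy ((mem_filter.mp hz).2.trans hys.symm)

def precedingFiber (B S : Finset α) (y : α) : Finset (Fin (Fintype.card α) ≃ α) :=
  {σ | B ∩ precedingSet σ y = S}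

lemma card_precedingFiber_le {B S S' : Finset α} {y y' : α} (τ : Equiv.Perm α)
    (hB : B.map τ.toEmbedding = B) (hS : S.map τ.toEmbedding = S') (hy : τ y = y') :
    #(precedingFiber B S y) ≤ #(precedingFiber B S' y') := by
  refine card_le_card_of_injOn (fun σ => σ.trans τ) (fun σ hσ => ?_)
    fun σ _ σ' _ h => Equiv.ext fun i => τ.injective (Equiv.congr_fun h i)
  simp only [precedingFiber, coe_filter, mem_univ, true_and, Set.mem_ofPred_eq] at hσ ⊢
  rw [← hy, precedingSet_trans, ← hB, ← map_inter, hσ, hS]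

lemma card_precedingFiber_eq {B S S' : Finset α} {y y' : α} (hy : y ∈ B) (hy' : y' ∈ B)
    (hS : S ⊆ B.erase y) (hS' : S' ⊆ B.erase y') (hcard : #S = #S') :
    #(precedingFiber B S y) = #(precedingFiber B S' y') := by
  obtain ⟨τ, hB, hSτ, hyτ⟩ := exists_perm_map_eq_of_card_eq hy hy' hS hS' hcard
  obtain ⟨τ', hB', hSτ', hyτ'⟩ := exists_perm_map_eq_of_card_eq hy' hy hS' hS hcard.symm
  exact (card_precedingFiber_le τ hB hSτ hyτ).antisymm (card_precedingFiber_le τ' hB' hSτ' hyτ')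

lemma card_precedingFiber_mul {B S : Finset α} {y : α} (hy : y ∈ B) (hS : S ⊆ B.erase y) :
    #(precedingFiber B S y) * (#B * (#B - 1).choose #S) = (Fintype.card α).factorial := by
  have hlt : #S < #B := (card_le_card hS).trans_lt (card_erase_lt_of_mem hy)
  calc #(precedingFiber B S y) * (#B * (#B - 1).choose #S)
      = ∑ z ∈ B, ∑ S' ∈ (B.erase z).powersetCard #S, #(precedingFiber B S' z) := by
        rw [sum_congr rfl fun z hz => sum_congr rfl fun S' hS' =>
          card_precedingFiber_eq hz hy (mem_powersetCard.mp hS').1 hS (mem_powersetCard.mp hS').2]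
        simp only [sum_const, card_powersetCard, smul_eq_mul]
        rw [sum_congr rfl fun z hz => by rw [card_erase_of_mem hz], sum_const, smul_eq_mul]
        ring
    _ = ∑ z ∈ B, #{σ : Fin (Fintype.card α) ≃ α | #(B ∩ precedingSet σ z) = #S} := by
        refine sum_congr rfl fun z _ => ?_
        have hmaps : Set.MapsTo (fun σ => B ∩ precedingSet σ z)
            ({σ | #(B ∩ precedingSet σ z) = #S} : Finset (Fin (Fintype.card α) ≃ α))
            ((B.erase z).powersetCard #S) := by
          intro σ hσ
          refine mem_powersetCard.mpr ⟨fun i hi => ?_, (mem_filter.mp (mem_coe.mp hσ)).2⟩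
          obtain ⟨hiB, hiP⟩ := mem_inter.mp hi
          exact mem_erase.mpr ⟨fun h => notMem_precedingSet σ z (h ▸ hiP), hiB⟩
        rw [card_eq_sum_card_fiberwise hmaps]
        refine sum_congr rfl fun S' hS' => ?_
        rw [precedingFiber, filter_filter]
        refine congrArg card (filter_congr fun σ _ => ?_)
        exact ⟨fun h => ⟨h ▸ (mem_powersetCard.mp hS').2, h⟩, And.right⟩
    _ = ∑ σ : Fin (Fintype.card α) ≃ α, #{z ∈ B | #(B ∩ precedingSet σ z) = #S} := by
        simp only [card_filter]
        exact sum_comm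
    _ = (Fintype.card α).factorial := by
        simp [card_filter_card_inter_precedingSet_eq_one _ hlt,
          Fintype.card_equiv (Fintype.equivFin α).symm]

lemma sum_prod_inter_precedingSet (q : α → ℝ) {B : Finset α} {x : α} (hx : x ∈ B) :
    ∑ σ : Fin (Fintype.card α) ≃ α, ∏ i ∈ B ∩ precedingSet σ x, q i
      = (Fintype.card α).factorial * ∑ S ∈ (B.erase x).powerset,
          (∏ i ∈ S, q i) / (((#B - #S : ℕ) : ℝ) * (((#B).choose #S : ℕ) : ℝ)) := by
  have hmaps : Set.MapsTo (fun σ => B ∩ precedingSet σ x)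
      (univ : Finset (Fin (Fintype.card α) ≃ α)) (B.erase x).powerset := fun σ _ =>
    mem_powerset.mpr fun i hi =>
    mem_erase.mpr ⟨fun h => notMem_precedingSet σ x (h ▸ (mem_inter.mp hi).2), (mem_inter.mp hi).1⟩
  rw [← sum_fiberwise_of_maps_to hmaps, mul_sum]
  refine sum_congr rfl fun S hS => ?_
  have hlt : #S < #B := (card_le_card (mem_powerset.mp hS)).trans_lt (card_erase_lt_of_mem hx)
  have hchoose : #B * (#B - 1).choose #S = (#B - #S) * (#B).choose #S := by
    have := Nat.choose_mul_succ_eq (#B - 1) #S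
    rw [Nat.sub_add_cancel (card_pos.mpr ⟨x, hx⟩)] at this
    rw [mul_comm, this, mul_comm]
  have hcount := card_precedingFiber_mul hx (mem_powerset.mp hS)
  rw [hchoose] at hcount
  have hpos : (0 : ℝ) < ((#B - #S : ℕ) : ℝ) * (((#B).choose #S : ℕ) : ℝ) := by
    have hC := Nat.choose_pos hlt.le
    have hsub : 0 < #B - #S := Nat.sub_pos_of_lt hlt
    positivity
  rw [sum_congr rfl fun σ hσ => by rw [(mem_filter.mp hσ).2], sum_const, nsmul_eq_mul,
    ← hcount, Nat.cast_mul _ ((#B - #S) * _), Nat.cast_mul (#B - #S), mul_assoc,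
    mul_div_cancel₀ _ hpos.ne']
  rfl

end Orderings

theorem stmt_5_general {α β : Type*} [Fintype α] [Fintype β] [DecidableEq α]
    (Auth : β → Finset α) (w : β → ℝ) (p : α → ℝ) (x : α) :
    shapley (relExt p (vFC Auth w)) x =
      p x * ∑ k ∈ Pap Auth x,
        w k * ∑ S ∈ ((Auth k).erase x).powerset,
          (∏ i ∈ S, (1 - p i)) /
            ((((Auth k).card - S.card : ℕ) : ℝ) * (((Auth k).card.choose S.card : ℕ) : ℝ)) := by
  -- `vFC` and `Pap` decide membership classically; use the same instance throughout.
  obtain rfl : ‹DecidableEq α› = fun a b => Classical.propDecidable (a = b) :=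
    Subsingleton.elim _ _
  have hfac : ((Fintype.card α).factorial : ℝ) ≠ 0 := by positivity
  simp only [shapley, relExt_vFC_insert_sub Auth w p (notMem_precedingSet _ x)]
  rw [sum_comm, mul_sum, mul_sum]
  refine sum_congr rfl fun k hk => ?_
  rw [← mul_sum, ← mul_sum, sum_prod_inter_precedingSet _ (mem_filter.mp hk).2]
  field_simp

theorem stmt_5 {α β : Type*} [Fintype α] [Fintype β] [DecidableEq α]
    (Auth : β → Finset α) (hAuth : ∀ k, (Auth k).Nonempty)
    (w : β → ℝ) (hw : ∀ k, 0 ≤ w k)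
    (p : α → ℝ) (hp : ∀ i, p i ∈ Set.Icc (0 : ℝ) 1) (x : α) :
    shapley (relExt p (vFC Auth w)) x =
      p x * ∑ k ∈ Pap Auth x,
        w k * ∑ S ∈ ((Auth k).erase x).powerset,
          (∏ i ∈ S, (1 - p i)) /
            ((((Auth k).card - S.card : ℕ) : ℝ) * (((Auth k).card.choose S.card : ℕ) : ℝ)) :=
  stmt_5_general Auth w p x

end
end

section
/- In a credit-attribution setting with reliabilities p : N → [0,1], for every author x the Shapley value of x in the reliability extension of the full obligation game satisfies Sh[v̄_{FO}](x) = Σ_{k ∈ Pap_x} (w_k / n_k) · ∏_{i ∈ Auth_k} p_i. -/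
open Finset

attribute [local instance] Classical.propDecidable

noncomputable section

/-!
The full obligation game is the weighted sum `∑ₖ wₖ • u_{Auth k}` of unanimity games
`u_A S = [A ⊆ S]`, and both the reliability extension and the Shapley value are linear in the game. Expanding
`∏_{i ∈ S \ A} (pᵢ + (1 - pᵢ)) = 1` shows that the reliability extension of `u_A` is
`(∏_{i ∈ A} pᵢ) • u_A`. Finally the marginal contribution of `x ∈ A` to `u_A` along an order is `1`
exactly when `x` comes last among `A`; swapping two members of `A` shows that each of them is last
in the same number of orders, so `x` is last in `n! / |A|` of them.
-/

def unanimityGame {α : Type*} (A S : Finset α) : ℝ :=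
  if A ⊆ S then 1 else 0

section Linearity

variable {α ι : Type*} (s : Finset ι) (c : ι → ℝ) (v : ι → Finset α → ℝ)

theorem relExt_sum_mul (p : α → ℝ) (S : Finset α) :
    relExt p (fun T => ∑ k ∈ s, c k * v k T) S = ∑ k ∈ s, c k * relExt p (v k) S := by
  simp only [relExt, sum_mul, mul_sum]
  rw [sum_comm]
  exact sum_congr rfl fun _ _ => sum_congr rfl fun _ _ => by ring

theorem shapley_sum_mul [Fintype α] (x : α) :
    shapley (fun T => ∑ k ∈ s, c k * v k T) x = ∑ k ∈ s, c k * shapley (v k) x := by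
  simp only [shapley, ← sum_sub_distrib, ← mul_sub, mul_sum]
  rw [sum_comm]
  exact sum_congr rfl fun _ _ => sum_congr rfl fun _ _ => by ring

end Linearity

theorem vFO_eq_sum_unanimityGame {α β : Type*} [Fintype β] (Auth : β → Finset α) (w : β → ℝ)
    (S : Finset α) : vFO Auth w S = ∑ k, w k * unanimityGame (Auth k) S := by
  simp only [vFO, unanimityGame, sum_filter, mul_ite, mul_one, mul_zero]

theorem sum_powerset_ite_subset_prodPi {α : Type*} (p : α → ℝ) {A S : Finset α} (hAS : A ⊆ S) :
    ∑ T ∈ S.powerset, (if A ⊆ T then prodPi p T S else 0) = ∏ i ∈ A, p i := by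
  -- Killing the factors `1 - pᵢ` with `i ∈ A` turns the sum into the expansion of a product.
  have hterm : ∀ T ∈ S.powerset, (if A ⊆ T then prodPi p T S else 0) =
      (∏ i ∈ T, p i) * ∏ i ∈ S \ T, (if i ∈ A then 0 else 1 - p i) := by
    intro T _
    split_ifs with hAT
    · refine congrArg _ (prod_congr rfl fun i hi => ?_)
      rw [if_neg fun hiA => (mem_sdiff.mp hi).2 (hAT hiA)]
    · obtain ⟨a, haA, haT⟩ := not_subset.mp hAT
      rw [prod_eq_zero (mem_sdiff.mpr ⟨hAS haA, haT⟩) (if_pos haA : _ = (0 : ℝ)), mul_zero]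
  rw [sum_congr rfl hterm, ← prod_add]
  simp only [add_ite, add_zero, add_sub_cancel]
  rw [Finset.prod_ite_mem, inter_eq_right.mpr hAS]

theorem relExt_unanimityGame {α : Type*} (p : α → ℝ) (A S : Finset α) :
    relExt p (unanimityGame A) S = (∏ i ∈ A, p i) * unanimityGame A S := by
  unfold relExt unanimityGame
  by_cases hAS : A ⊆ S
  · simp only [ite_mul, one_mul, zero_mul, if_pos hAS, mul_one]
    exact sum_powerset_ite_subset_prodPi p hAS
  · rw [if_neg hAS, mul_zero]
    refine sum_eq_zero fun T hT => ?_
    rw [if_neg fun hAT => hAS (hAT.trans (mem_powerset.mp hT)), zero_mul]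

theorem relExt_vFO {α β : Type*} [Fintype β] (Auth : β → Finset α) (w : β → ℝ) (p : α → ℝ) :
    relExt p (vFO Auth w) =
      fun S => ∑ k, (w k * ∏ i ∈ Auth k, p i) * unanimityGame (Auth k) S := by
  funext S
  rw [funext (vFO_eq_sum_unanimityGame Auth w), relExt_sum_mul]
  simp only [relExt_unanimityGame, mul_assoc]

section Orders

variable {α ι : Type*} [LinearOrder ι]

def IsLastIn (σ : ι ≃ α) (A : Finset α) (a : α) : Prop :=
  ∀ y ∈ A, σ.symm y ≤ σ.symm a

theorem card_filter_isLastIn (σ : ι ≃ α) {A : Finset α} (hA : A.Nonempty) :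
    (A.filter (IsLastIn σ A)).card = 1 := by
  obtain ⟨a, haA, hmax⟩ := A.exists_max_image σ.symm hA
  refine card_eq_one.mpr ⟨a, ?_⟩
  ext b
  simp only [mem_filter, mem_singleton]
  constructor
  · rintro ⟨hbA, hb⟩
    exact σ.symm.injective (le_antisymm (hmax b hbA) (hb a haA))
  · rintro rfl
    exact ⟨haA, hmax⟩

theorem IsLastIn.trans_swap {σ : ι ≃ α} {A : Finset α} {a b : α}
    (ha : a ∈ A) (hb : b ∈ A) (h : IsLastIn σ A a) :
    IsLastIn (σ.trans (Equiv.swap a b)) A b := by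
  intro y hy
  have hswap : Equiv.swap a b y ∈ A := by
    rw [Equiv.swap_apply_def]
    split_ifs <;> assumption
  simpa [Equiv.symm_trans_apply] using h _ hswap

theorem card_isLastIn_eq [Fintype ι] [DecidableEq ι] [Fintype α] {A : Finset α} {a b : α}
    (ha : a ∈ A) (hb : b ∈ A) :
    (univ.filter fun σ : ι ≃ α => IsLastIn σ A a).card =
      (univ.filter fun σ : ι ≃ α => IsLastIn σ A b).card := by
  refine card_nbij' (fun σ => σ.trans (Equiv.swap a b)) (fun σ => σ.trans (Equiv.swap a b))
    ?_ ?_ ?_ ?_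
  · intro σ hσ
    simp only [coe_filter, mem_univ, true_and, Set.mem_ofPred_eq] at hσ ⊢
    exact hσ.trans_swap ha hb
  · intro σ hσ
    simp only [coe_filter, mem_univ, true_and, Set.mem_ofPred_eq] at hσ ⊢
    rw [Equiv.swap_comm]
    exact hσ.trans_swap hb ha
  · intro σ _
    ext
    simp
  · intro σ _
    ext
    simp

theorem card_mul_card_isLastIn [Fintype α] {A : Finset α} {x : α} (hx : x ∈ A) :
    A.card * (univ.filter fun σ : Fin (Fintype.card α) ≃ α => IsLastIn σ A x).card =
      (Fintype.card α).factorial := by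
  calc A.card * (univ.filter fun σ : Fin (Fintype.card α) ≃ α => IsLastIn σ A x).card
      = ∑ a ∈ A, (univ.filter fun σ : Fin (Fintype.card α) ≃ α => IsLastIn σ A a).card := by
        rw [sum_congr rfl fun a ha => card_isLastIn_eq ha hx, sum_const, smul_eq_mul]
    _ = ∑ σ : Fin (Fintype.card α) ≃ α, (A.filter (IsLastIn σ A)).card := by
        simp only [card_filter]
        exact sum_comm
    _ = (Fintype.card α).factorial := by
        rw [sum_congr rfl fun σ _ => card_filter_isLastIn σ ⟨x, hx⟩, sum_const, smul_eq_mul,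
          mul_one, card_univ, Fintype.card_equiv (Fintype.equivFin α).symm, Fintype.card_fin]

end Orders

theorem subset_insert_precedingSet_iff {α : Type*} [Fintype α] (σ : Fin (Fintype.card α) ≃ α)
    (A : Finset α) (x : α) : A ⊆ insert x (precedingSet σ x) ↔ IsLastIn σ A x := by
  rw [subset_iff]
  simp only [IsLastIn, mem_insert, precedingSet, mem_filter, mem_univ, true_and,
    le_iff_lt_or_eq, σ.symm.injective.eq_iff]
  exact forall₂_congr fun _ _ => or_comm

theorem unanimityGame_insert_precedingSet_sub {α : Type*} [Fintype α]
    (σ : Fin (Fintype.card α) ≃ α) {A : Finset α} {x : α} (hx : x ∈ A) :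
    unanimityGame A (insert x (precedingSet σ x)) - unanimityGame A (precedingSet σ x) =
      if IsLastIn σ A x then 1 else 0 := by
  have hnot : ¬ A ⊆ precedingSet σ x := fun h => by simpa [precedingSet] using h hx
  rw [unanimityGame, unanimityGame, if_neg hnot, sub_zero]
  exact if_congr (subset_insert_precedingSet_iff σ A x) rfl rfl

theorem shapley_unanimityGame {α : Type*} [Fintype α] (A : Finset α) (x : α) :
    shapley (unanimityGame A) x = if x ∈ A then ((A.card : ℝ))⁻¹ else 0 := by
  unfold shapley
  split_ifs with hxA
  · have hcard := card_mul_card_isLastIn hxA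
    have hlast : ((univ.filter fun σ : Fin (Fintype.card α) ≃ α => IsLastIn σ A x).card : ℝ) ≠ 0 :=
      by exact_mod_cast right_ne_zero_of_mul (hcard ▸ Nat.factorial_ne_zero _)
    simp only [unanimityGame_insert_precedingSet_sub _ hxA]
    rw [← sum_filter, sum_const, nsmul_one, ← hcard, Nat.cast_mul]
    field_simp
  · simp only [unanimityGame, subset_insert_iff_of_notMem hxA, sub_self, sum_const_zero,
      mul_zero]

theorem stmt_6_general {α β : Type*} [Fintype α] [Fintype β]
    (Auth : β → Finset α)
    (w : β → ℝ)
    (p : α → ℝ) (x : α) :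
    shapley (relExt p (vFO Auth w)) x =
      ∑ k ∈ Pap Auth x, (w k / ((Auth k).card : ℝ)) * ∏ i ∈ Auth k, p i := by
  rw [relExt_vFO, shapley_sum_mul, Pap, sum_filter]
  refine sum_congr rfl fun k _ => ?_
  rw [shapley_unanimityGame]
  split_ifs
  · ring
  · rw [mul_zero]

theorem stmt_6 {α β : Type*} [Fintype α] [Fintype β] [DecidableEq α]
    (Auth : β → Finset α) (hAuth : ∀ k, (Auth k).Nonempty)
    (w : β → ℝ) (hw : ∀ k, 0 ≤ w k)
    (p : α → ℝ) (hp : ∀ i, p i ∈ Set.Icc (0 : ℝ) 1) (x : α) :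
    shapley (relExt p (vFO Auth w)) x =
      ∑ k ∈ Pap Auth x, (w k / ((Auth k).card : ℝ)) * ∏ i ∈ Auth k, p i :=
  stmt_6_general Auth w p x

end
end

section
/- Let N be a finite set of players, v : 𝒫(N) → ℝ a TU-game, p : N → [0,1] reliabilities, and v̄ the reliability extension of v. Then for every A ⊆ N and every x ∈ N with x ∉ A, the marginal contribution of x satisfies v̄(A ∪ {x}) − v̄(A) = p_x · Σ_{R ⊆ A} Π_{R,A}(p) · ( v(R ∪ {x}) − v(R) ). -/
open Finset

attribute [local instance] Classical.propDecidable

noncomputable section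

/-! Splitting the coalitions `T ⊆ insert x A` according to whether `x ∈ T`, the player `x`
contributes the factor `1 - p x` or `p x` to `Π_{T, A ∪ {x}}`, so
`v̄(A ∪ {x}) = Σ_{T ⊆ A} Π_{T,A} ((1 - p x) v(T) + p x v(T ∪ {x}))`,
and subtracting `v̄(A)` leaves `p x` times the expected marginal contribution. -/

section

variable {α : Type*} (p : α → ℝ) {T A : Finset α} {x : α}

lemma prodPi_insert_right (hxT : x ∉ T) (hxA : x ∉ A) :
    prodPi p T (insert x A) = (1 - p x) * prodPi p T A := by
  rw [prodPi, insert_sdiff_of_notMem _ hxT, prod_insert (by simp [hxA]), prodPi]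
  ring

lemma prodPi_insert_insert (hxT : x ∉ T) (hxA : x ∉ A) :
    prodPi p (insert x T) (insert x A) = p x * prodPi p T A := by
  rw [prodPi, insert_sdiff_insert, sdiff_insert, erase_eq_of_notMem (by simp [hxA]),
    prod_insert hxT, prodPi]
  ring

lemma relExt_insert (v : Finset α → ℝ) (hxA : x ∉ A) :
    relExt p v (insert x A) =
      ∑ T ∈ A.powerset, prodPi p T A * ((1 - p x) * v T + p x * v (insert x T)) := by
  rw [relExt, sum_powerset_insert hxA, ← sum_add_distrib]
  refine sum_congr rfl fun T hT => ?_
  have hxT : x ∉ T := fun h => hxA (mem_powerset.mp hT h)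
  rw [prodPi_insert_right p hxT hxA, prodPi_insert_insert p hxT hxA]
  ring

end

theorem stmt_15_general {α : Type*} [DecidableEq α]
    (v : Finset α → ℝ) (p : α → ℝ)
    (A : Finset α) (x : α) (hx : x ∉ A) :
    relExt p v (insert x A) - relExt p v A =
      p x * ∑ R ∈ A.powerset, prodPi p R A * (v (insert x R) - v R) := by
  obtain rfl : ‹DecidableEq α› = fun a b => Classical.propDecidable (a = b) :=
    Subsingleton.elim _ _
  rw [relExt_insert p v hx, relExt, mul_sum, ← sum_sub_distrib]
  exact sum_congr rfl fun T _ => by ring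

theorem stmt_15 {α : Type*} [Fintype α] [DecidableEq α]
    (v : Finset α → ℝ) (p : α → ℝ) (hp : ∀ i, p i ∈ Set.Icc (0 : ℝ) 1)
    (A : Finset α) (x : α) (hx : x ∉ A) :
    relExt p v (insert x A) - relExt p v A =
      p x * ∑ R ∈ A.powerset, prodPi p R A * (v (insert x R) - v R) :=
  stmt_15_general v p A x hx

end
end

section
/- Let n ≥ 3 and let G be either the complete graph K_n on vertex set {1,…,n} or the star graph S_n on vertex set {1,…,n} centered at vertex 1. Let p = (p_1,…,p_n) be a reliability vector with p_1 ∈ (0,1] and suppose there are indices 2 ≤ i ≠ j ≤ n with 0 < p_i = p_j < 1. For ε ∈ ℝ let p_{i,j}(ε) denote the vector obtained from p by adding ε to coordinate j and subtracting ε from coordinate i. Then there exists ε₀ > 0 such that for every ε ∈ [−ε₀, ε₀] with ε ≠ 0, Sh[v̄_{NC1}](1) evaluated at p_{i,j}(ε) is strictly smaller than Sh[v̄_{NC1}](1) evaluated at p. -/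
open Finset

attribute [local instance] Classical.propDecidable

noncomputable section

/-- The star graph on `Fin n` centered at `c`. -/
def starGraph (n : ℕ) (c : Fin n) : SimpleGraph (Fin n) :=
  SimpleGraph.fromRel (fun i _ => i = c)

/-!
As a function of `(p i, p j)`, the Shapley value `f` of the centre `c` is affine in each variable,
and it is symmetric because swapping `i` and `j` is a graph automorphism fixing `c`. Hence
`f (t - ε) (t + ε) = f t t - ε² d`, where `d = f 1 1 - f 1 0 - f 0 1 + f 0 0` is the Shapley
value of `c` in the mixed second difference of `v̄` in `p i, p j`. On a coalition `S ∋ i, j`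
that game is the reliability extension, over `S \ {i, j}`, of
`Δ(T) = v(T+i+j) - v(T+i) - v(T+j) + v(T)`, and for `v = v_NC1` we have
`Δ(T) = -|(N[i] ∩ N[j]) \ N[T]|` (coverage is submodular). This is `≤ 0`, vanishes once the
dominating vertex `c` is in `T`, and is `< 0` at `T = ∅` because `c ∈ N[i] ∩ N[j]`. So every
marginal contribution of `c` to the cross game is `-p c · (v̄ of Δ) ≥ 0`, the one after `{i, j}`
is `-p c · Δ(∅) > 0`, and `d > 0`; any `ε₀` works.
-/

namespace ReliabilityExtension

variable {α : Type*}

lemma prodPi_insert_right (q : α → ℝ) {k : α} {T S : Finset α} (hk : k ∉ S) (hT : T ⊆ S) :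
    prodPi q T (insert k S) = (1 - q k) * prodPi q T S := by
  rw [prodPi, prodPi, Finset.insert_sdiff_of_notMem _ (fun h => hk (hT h)),
    Finset.prod_insert (fun h => hk (Finset.mem_sdiff.1 h).1)]
  ring

lemma prodPi_insert_insert (q : α → ℝ) {k : α} {T S : Finset α} (hk : k ∉ S) (hT : T ⊆ S) :
    prodPi q (insert k T) (insert k S) = q k * prodPi q T S := by
  rw [prodPi, prodPi, Finset.insert_sdiff_insert, Finset.sdiff_insert_of_notMem hk,
    Finset.prod_insert (fun h => hk (hT h))]
  ring

lemma relExt_insert (q : α → ℝ) (v : Finset α → ℝ) {k : α} {S : Finset α} (hk : k ∉ S) :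
    relExt q v (insert k S) =
      (1 - q k) * relExt q v S + q k * relExt q (fun T => v (insert k T)) S := by
  simp only [relExt, Finset.sum_powerset_insert hk, Finset.mul_sum]
  congr 1 <;> refine Finset.sum_congr rfl fun T hT => ?_
  · rw [prodPi_insert_right q hk (Finset.mem_powerset.1 hT)]; ring
  · rw [prodPi_insert_insert q hk (Finset.mem_powerset.1 hT)]; ring

lemma relExt_congr {p q : α → ℝ} (v : Finset α → ℝ) {S : Finset α} (h : ∀ k ∈ S, p k = q k) :
    relExt p v S = relExt q v S := by
  refine Finset.sum_congr rfl fun T hT => ?_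
  have hTS := Finset.mem_powerset.1 hT
  rw [prodPi, prodPi, Finset.prod_congr rfl fun k hk => h k (hTS hk),
    Finset.prod_congr rfl fun k hk => congrArg (1 - ·) (h k (Finset.mem_sdiff.1 hk).1)]

lemma relExt_update_of_notMem (q : α → ℝ) (v : Finset α → ℝ) {k : α} {S : Finset α}
    (hk : k ∉ S) (x : ℝ) : relExt (Function.update q k x) v S = relExt q v S :=
  relExt_congr v fun _ hm => Function.update_of_ne (ne_of_mem_of_not_mem hm hk) _ _

lemma relExt_update (q : α → ℝ) (v : Finset α → ℝ) (k : α) (x : ℝ) (S : Finset α) :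
    relExt (Function.update q k x) v S =
      (1 - x) * relExt (Function.update q k 0) v S + x * relExt (Function.update q k 1) v S := by
  by_cases hk : k ∈ S
  · rw [← Finset.insert_erase hk]
    have hk' := Finset.notMem_erase k S
    simp only [relExt_insert _ v hk', Function.update_self, relExt_update_of_notMem q _ hk']
    ring
  · simp only [relExt_update_of_notMem q v hk]
    ring

lemma relExt_empty (q : α → ℝ) (v : Finset α → ℝ) : relExt q v ∅ = v ∅ := by
  simp [relExt, prodPi]

lemma relExt_zero (q : α → ℝ) (S : Finset α) : relExt q (fun _ => 0) S = 0 := by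
  simp [relExt]

lemma relExt_nonpos {p : α → ℝ} (hp : ∀ k, p k ∈ Set.Icc (0 : ℝ) 1) {v : Finset α → ℝ}
    (hv : ∀ T, v T ≤ 0) (S : Finset α) : relExt p v S ≤ 0 :=
  Finset.sum_nonpos fun T _ => mul_nonpos_of_nonpos_of_nonneg (hv T) <|
    mul_nonneg (Finset.prod_nonneg fun k _ => (hp k).1)
      (Finset.prod_nonneg fun k _ => sub_nonneg.2 (hp k).2)

lemma prodPi_image (q : α → ℝ) (e : α ≃ α) (T S : Finset α) :
    prodPi q (T.image e) (S.image e) = prodPi (q ∘ e) T S := by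
  rw [prodPi, prodPi, ← Finset.image_sdiff S T e.injective,
    Finset.prod_image e.injective.injOn, Finset.prod_image e.injective.injOn]
  rfl

lemma relExt_image (q : α → ℝ) {v : Finset α → ℝ} {e : α ≃ α}
    (hv : ∀ T, v (T.image e) = v T) (S : Finset α) :
    relExt q v (S.image e) = relExt (q ∘ e) v S := by
  rw [relExt, Finset.powerset_image,
    Finset.sum_image fun _ _ _ _ h => Finset.image_injective e.injective h]
  exact Finset.sum_congr rfl fun T _ => by rw [hv, prodPi_image]

def mixedDiff (v : Finset α → ℝ) (i j : α) (T : Finset α) : ℝ :=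
  v (insert i (insert j T)) - v (insert i T) - v (insert j T) + v T

def pairUpdate (p : α → ℝ) (i j : α) (x y : ℝ) : α → ℝ :=
  Function.update (Function.update p i x) j y

lemma pairUpdate_swap (p : α → ℝ) {i j : α} (hij : i ≠ j) (x y : ℝ) :
    pairUpdate p i j y x ∘ Equiv.swap i j = pairUpdate p i j x y := by
  funext k
  rcases eq_or_ne k i with rfl | hki
  · simp [pairUpdate, hij]
  rcases eq_or_ne k j with rfl | hkj
  · simp [pairUpdate, hij]
  · simp [pairUpdate, Equiv.swap_apply_of_ne_of_ne hki hkj, hki, hkj]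

/-- As `v̄` is affine in each coordinate, this is `∂²v̄ / ∂p_i ∂p_j`. -/
def relExtCross (p : α → ℝ) (v : Finset α → ℝ) (i j : α) (S : Finset α) : ℝ :=
  relExt (pairUpdate p i j 1 1) v S - relExt (pairUpdate p i j 1 0) v S
    - relExt (pairUpdate p i j 0 1) v S + relExt (pairUpdate p i j 0 0) v S

lemma relExtCross_of_notMem (p : α → ℝ) (v : Finset α → ℝ) {i j : α} {S : Finset α}
    (h : i ∉ S ∨ j ∉ S) : relExtCross p v i j S = 0 := by
  rcases h with hi | hj
  · have key (x y : ℝ) :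
        relExt (pairUpdate p i j x y) v S = relExt (Function.update p j y) v S := by
      rw [pairUpdate, relExt_congr v fun k hk => ?_]
      rcases eq_or_ne k j with rfl | hkj
      · simp
      · simp [Function.update_of_ne hkj, Function.update_of_ne (ne_of_mem_of_not_mem hk hi)]
    simp only [relExtCross, key]
    ring
  · simp only [relExtCross, pairUpdate, relExt_update_of_notMem _ v hj]
    ring

lemma relExtCross_insert_insert (p : α → ℝ) (v : Finset α → ℝ) {i j : α} (hij : i ≠ j)
    {S : Finset α} (hi : i ∉ S) (hj : j ∉ S) :
    relExtCross p v i j (insert i (insert j S)) = relExt p (mixedDiff v i j) S := by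
  have hi' : i ∉ insert j S := by simp [hij, hi]
  have hS (x y : ℝ) : ∀ k ∈ S, pairUpdate p i j x y k = p k := fun k hk => by
    rw [pairUpdate, Function.update_of_ne (ne_of_mem_of_not_mem hk hj),
      Function.update_of_ne (ne_of_mem_of_not_mem hk hi)]
  have hpi (x y : ℝ) : pairUpdate p i j x y i = x := by
    simp [pairUpdate, Function.update_of_ne hij]
  have hpj (x y : ℝ) : pairUpdate p i j x y j = y := by simp [pairUpdate]
  simp only [relExtCross, relExt_insert _ _ hi', relExt_insert _ _ hj, hpi, hpj,
    relExt_congr _ (hS _ _)]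
  simp only [relExt, mixedDiff, sub_mul, add_mul, Finset.sum_add_distrib, Finset.sum_sub_distrib]
  ring

lemma relExtCross_marginal (p : α → ℝ) {v : Finset α → ℝ} {c i j : α} (hij : i ≠ j)
    (hci : c ≠ i) (hcj : c ≠ j) (hv : ∀ T, mixedDiff v i j (insert c T) = 0)
    {S : Finset α} (hc : c ∉ S) (hi : i ∉ S) (hj : j ∉ S) :
    relExtCross p v i j (insert c (insert i (insert j S)))
        - relExtCross p v i j (insert i (insert j S)) =
      -(p c * relExt p (mixedDiff v i j) S) := by
  rw [Finset.insert_comm c i, Finset.insert_comm c j,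
    relExtCross_insert_insert p v hij (by simp [hci.symm, hi]) (by simp [hcj.symm, hj]),
    relExtCross_insert_insert p v hij hi hj, relExt_insert p _ hc]
  simp only [hv, relExt_zero]
  ring

lemma relExtCross_marginal_nonneg {p : α → ℝ} (hp : ∀ k, p k ∈ Set.Icc (0 : ℝ) 1)
    {v : Finset α → ℝ} {c i j : α} (hij : i ≠ j) (hci : c ≠ i) (hcj : c ≠ j)
    (hv : ∀ T, mixedDiff v i j (insert c T) = 0) (hv' : ∀ T, mixedDiff v i j T ≤ 0)
    {S : Finset α} (hc : c ∉ S) :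
    0 ≤ relExtCross p v i j (insert c S) - relExtCross p v i j S := by
  by_cases hS : i ∈ S ∧ j ∈ S
  · obtain ⟨A, hiA, hjA, rfl⟩ : ∃ A, i ∉ A ∧ j ∉ A ∧ S = insert i (insert j A) :=
      ⟨(S.erase i).erase j, fun h => Finset.notMem_erase i S (Finset.mem_of_mem_erase h),
        Finset.notMem_erase j _, by
          rw [Finset.insert_erase (Finset.mem_erase.2 ⟨hij.symm, hS.2⟩), Finset.insert_erase hS.1]⟩
    rw [relExtCross_marginal p hij hci hcj hv (by simp_all) hiA hjA, neg_nonneg]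
    exact mul_nonpos_of_nonneg_of_nonpos (hp c).1 (relExt_nonpos hp hv' A)
  · have hS' : i ∉ S ∨ j ∉ S := by tauto
    rw [relExtCross_of_notMem p v hS', relExtCross_of_notMem p v (by simpa [hci.symm, hcj.symm])]
    simp

lemma apply_sub_add_eq_of_biaffine (f : ℝ → ℝ → ℝ) (hx : ∀ x y, f x y = (1 - x) * f 0 y + x * f 1 y)
    (hy : ∀ x y, f x y = (1 - y) * f x 0 + y * f x 1) (hf : f 1 0 = f 0 1) (t ε : ℝ) :
    f (t - ε) (t + ε) = f t t - ε ^ 2 * (f 1 1 - f 1 0 - f 0 1 + f 0 0) := by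
  rw [hy (t - ε), hx (t - ε) 0, hx (t - ε) 1, hy t t, hx t 0, hx t 1]
  linear_combination (-ε) * hf

section Shapley

variable [Fintype α]

lemma shapley_add (v w : Finset α → ℝ) (x : α) :
    shapley (v + w) x = shapley v x + shapley w x := by
  simp only [shapley, Pi.add_apply, ← mul_add, ← Finset.sum_add_distrib]
  congr 1
  exact Finset.sum_congr rfl fun _ _ => by ring

lemma shapley_smul (a : ℝ) (v : Finset α → ℝ) (x : α) :
    shapley (a • v) x = a * shapley v x := by
  simp only [shapley, Pi.smul_apply, smul_eq_mul, ← mul_sub, ← Finset.mul_sum]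
  ring

lemma shapley_sub (v w : Finset α → ℝ) (x : α) :
    shapley (v - w) x = shapley v x - shapley w x := by
  simp only [shapley, Pi.sub_apply, ← mul_sub, ← Finset.sum_sub_distrib]
  congr 1
  exact Finset.sum_congr rfl fun _ _ => by ring

lemma shapley_relExt_update (q : α → ℝ) (v : Finset α → ℝ) (k : α) (x : ℝ) (c : α) :
    shapley (relExt (Function.update q k x) v) c =
      (1 - x) * shapley (relExt (Function.update q k 0) v) c
        + x * shapley (relExt (Function.update q k 1) v) c := by
  have h : relExt (Function.update q k x) v =
      (1 - x) • relExt (Function.update q k 0) v + x • relExt (Function.update q k 1) v :=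
    funext (relExt_update q v k x)
  rw [h, shapley_add, shapley_smul, shapley_smul]

lemma notMem_precedingSet (σ : Fin (Fintype.card α) ≃ α) (x : α) : x ∉ precedingSet σ x := by
  simp [precedingSet]

lemma precedingSet_trans (σ : Fin (Fintype.card α) ≃ α) (e : α ≃ α) (x : α) :
    precedingSet (σ.trans e) (e x) = (precedingSet σ x).image e := by
  ext y
  simp only [precedingSet, Finset.mem_filter, Finset.mem_univ, true_and, Finset.mem_image]
  exact ⟨fun h => ⟨e.symm y, by simpa using h, e.apply_symm_apply y⟩,
    fun ⟨z, hz, hzy⟩ => by simpa [← hzy] using hz⟩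

lemma card_precedingSet_apply (σ : Fin (Fintype.card α) ≃ α) (k : Fin (Fintype.card α)) :
    (precedingSet σ (σ k)).card = k := by
  have : precedingSet σ (σ k) = (Finset.Iio k).map σ.toEmbedding := by
    ext y
    simp [precedingSet]
  rw [this, Finset.card_map, Fin.card_Iio]

lemma exists_precedingSet_eq {x : α} {P : Finset α} (hx : x ∉ P) :
    ∃ σ : Fin (Fintype.card α) ≃ α, precedingSet σ x = P := by
  set σ₀ := (Fintype.equivFin α).symm
  have hP : P.card < Fintype.card α := by
    simpa [Finset.card_insert_of_notMem hx] using (insert x P).card_le_univ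
  set y := σ₀ ⟨P.card, hP⟩
  obtain ⟨e, he⟩ := Equiv.Perm.exists_map_finset_eq (precedingSet σ₀ y) P
    (card_precedingSet_apply σ₀ _)
  have hey : e y ∉ P := by
    rw [← he, Finset.mem_map_equiv, Equiv.symm_apply_apply]
    exact notMem_precedingSet σ₀ y
  set f := e.trans (Equiv.swap (e y) x)
  refine ⟨σ₀.trans f, ?_⟩
  have hfy : f y = x := by simp [f]
  simp only [Finset.map_eq_image, Equiv.coe_toEmbedding] at he
  rw [← hfy, precedingSet_trans, Equiv.coe_trans, ← Finset.image_image, he]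
  refine (Finset.image_congr fun z hz => ?_).trans Finset.image_id
  exact Equiv.swap_apply_of_ne_of_ne (fun h => hey (h ▸ hz)) (fun h => hx (h ▸ hz))

lemma shapley_pos {v : Finset α → ℝ} {x : α} (hv : ∀ S, x ∉ S → 0 ≤ v (insert x S) - v S)
    {S₀ : Finset α} (hS₀ : x ∉ S₀) (hpos : 0 < v (insert x S₀) - v S₀) : 0 < shapley v x := by
  obtain ⟨σ₀, hσ₀⟩ := exists_precedingSet_eq hS₀
  refine mul_pos (by positivity) (Finset.sum_pos' (fun σ _ => hv _ (notMem_precedingSet σ x))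
    ⟨σ₀, Finset.mem_univ _, ?_⟩)
  rwa [hσ₀]

lemma shapley_image (w : Finset α → ℝ) (e : α ≃ α) (x : α) :
    shapley (fun S => w (S.image e)) x = shapley w (e x) := by
  unfold shapley
  congr 1
  refine Fintype.sum_equiv ((Equiv.refl _).equivCongr e) _ _ fun σ => ?_
  rw [show (Equiv.refl _).equivCongr e σ = σ.trans e from rfl, precedingSet_trans,
    ← Finset.image_insert]

lemma shapley_relExt_comp (q : α → ℝ) {v : Finset α → ℝ} {e : α ≃ α}
    (hv : ∀ T, v (T.image e) = v T) {c : α} (hc : e c = c) :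
    shapley (relExt (q ∘ e) v) c = shapley (relExt q v) c := by
  conv_rhs => rw [← hc, ← shapley_image]
  simp only [relExt_image q hv]

lemma shapley_relExtCross_pos {p : α → ℝ} (hp : ∀ k, p k ∈ Set.Icc (0 : ℝ) 1)
    {v : Finset α → ℝ} {c i j : α} (hij : i ≠ j) (hci : c ≠ i) (hcj : c ≠ j) (hpc : 0 < p c)
    (hv : ∀ T, mixedDiff v i j (insert c T) = 0) (hv' : ∀ T, mixedDiff v i j T ≤ 0)
    (hv₀ : mixedDiff v i j ∅ < 0) :
    0 < shapley (relExtCross p v i j) c := by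
  refine shapley_pos (fun S hS => relExtCross_marginal_nonneg hp hij hci hcj hv hv' hS)
    (S₀ := insert i (insert j ∅)) (by simp [hci, hcj]) ?_
  rw [relExtCross_marginal p hij hci hcj hv (Finset.notMem_empty c) (Finset.notMem_empty i)
    (Finset.notMem_empty j), relExt_empty]
  nlinarith

lemma shapley_relExt_pairUpdate_left (p : α → ℝ) (v : Finset α → ℝ) {i j : α}
    (hij : i ≠ j) (x y : ℝ) (c : α) :
    shapley (relExt (pairUpdate p i j x y) v) c =
      (1 - x) * shapley (relExt (pairUpdate p i j 0 y) v) c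
        + x * shapley (relExt (pairUpdate p i j 1 y) v) c := by
  simp only [pairUpdate, Function.update_comm hij _ y p]
  exact shapley_relExt_update _ v i x c

lemma shapley_relExt_pairUpdate_right (p : α → ℝ) (v : Finset α → ℝ) (i j : α)
    (x y : ℝ) (c : α) :
    shapley (relExt (pairUpdate p i j x y) v) c =
      (1 - y) * shapley (relExt (pairUpdate p i j x 0) v) c
        + y * shapley (relExt (pairUpdate p i j x 1) v) c :=
  shapley_relExt_update _ v j y c

theorem shapley_relExt_pairUpdate_lt {p : α → ℝ} (hp : ∀ k, p k ∈ Set.Icc (0 : ℝ) 1)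
    {v : Finset α → ℝ} {c i j : α} (hij : i ≠ j) (hci : c ≠ i) (hcj : c ≠ j) (hpc : 0 < p c)
    (hv : ∀ T, mixedDiff v i j (insert c T) = 0) (hv' : ∀ T, mixedDiff v i j T ≤ 0)
    (hv₀ : mixedDiff v i j ∅ < 0) (hswap : ∀ T, v (T.image (Equiv.swap i j)) = v T)
    (hpij : p i = p j) {ε : ℝ} (hε : ε ≠ 0) :
    shapley (relExt (pairUpdate p i j (p i - ε) (p j + ε)) v) c < shapley (relExt p v) c := by
  have hsymm : shapley (relExt (pairUpdate p i j 1 0) v) c =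
      shapley (relExt (pairUpdate p i j 0 1) v) c := by
    rw [← pairUpdate_swap p hij 1 0]
    exact shapley_relExt_comp _ hswap (Equiv.swap_apply_of_ne_of_ne hci hcj)
  have hcross : shapley (relExt (pairUpdate p i j 1 1) v) c
      - shapley (relExt (pairUpdate p i j 1 0) v) c - shapley (relExt (pairUpdate p i j 0 1) v) c
      + shapley (relExt (pairUpdate p i j 0 0) v) c = shapley (relExtCross p v i j) c := by
    rw [← shapley_sub, ← shapley_sub, ← shapley_add]
    rfl
  have key := apply_sub_add_eq_of_biaffine (fun x y => shapley (relExt (pairUpdate p i j x y) v) c)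
    (shapley_relExt_pairUpdate_left p v hij · · c) (shapley_relExt_pairUpdate_right p v i j · · c)
    hsymm (p i) ε
  have hp_eq : pairUpdate p i j (p i) (p j) = p := by simp [pairUpdate]
  rw [hpij] at key hp_eq
  rw [hpij, key, hp_eq, hcross, sub_lt_self_iff]
  exact mul_pos (by positivity) (shapley_relExtCross_pos hp hij hci hcj hpc hv hv' hv₀)

end Shapley

lemma card_union_union_sub_add (A B C : Finset α) :
    ((A ∪ B ∪ C).card : ℝ) - (A ∪ C).card - (B ∪ C).card + C.card = -((A ∩ B) \ C).card := by
  have h := Finset.card_union_add_card_inter (A ∪ C) (B ∪ C)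
  rw [← Finset.union_union_distrib_right, ← Finset.inter_union_distrib_right,
    ← Finset.card_sdiff_add_card (A ∩ B) C] at h
  have h' : ((A ∪ B ∪ C).card : ℝ) + (((A ∩ B) \ C).card + C.card) =
      (A ∪ C).card + (B ∪ C).card := by
    exact_mod_cast h
  linarith

section Graph

variable [Fintype α] (G : SimpleGraph α)

lemma vNC1_eq_card_biUnion (S : Finset α) : vNC1 G S = (S.biUnion (closedNbhd G)).card := by
  rw [vNC1]
  congr 2
  ext y
  simp only [extBoundary, closedNbhd, nbhd, Finset.mem_union, Finset.mem_filter,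
    Finset.mem_univ, true_and, Finset.mem_biUnion, Finset.mem_insert]
  constructor
  · rintro (hy | ⟨-, x, hx, hxy⟩)
    exacts [⟨y, hy, Or.inl rfl⟩, ⟨x, hx, Or.inr hxy⟩]
  · rintro ⟨x, hx, rfl | hxy⟩
    · exact Or.inl hx
    · by_cases hy : y ∈ S
      exacts [Or.inl hy, Or.inr ⟨hy, x, hx, hxy⟩]

lemma mixedDiff_vNC1 (i j : α) (T : Finset α) :
    mixedDiff (vNC1 G) i j T =
      -((closedNbhd G i ∩ closedNbhd G j) \ T.biUnion (closedNbhd G)).card := by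
  simp only [mixedDiff, vNC1_eq_card_biUnion, Finset.biUnion_insert, ← Finset.union_assoc]
  exact card_union_union_sub_add _ _ _

lemma mixedDiff_vNC1_nonpos (i j : α) (T : Finset α) : mixedDiff (vNC1 G) i j T ≤ 0 := by
  rw [mixedDiff_vNC1]
  simp

lemma vNC1_image (e : G ≃g G) (S : Finset α) : vNC1 G (S.image e) = vNC1 G S := by
  have hN (x : α) : closedNbhd G (e x) = (closedNbhd G x).image e := by
    ext y
    obtain ⟨y, rfl⟩ := e.surjective y
    simp [closedNbhd, nbhd, e.injective.eq_iff, e.map_adj_iff]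
  rw [vNC1_eq_card_biUnion, vNC1_eq_card_biUnion, Finset.image_biUnion]
  simp only [hN, ← Finset.biUnion_image]
  exact congrArg _ (Finset.card_image_of_injective _ e.injective)

variable {G}

lemma mixedDiff_vNC1_insert_of_adj {c : α} (hc : ∀ y, y ≠ c → G.Adj c y) (i j : α)
    (T : Finset α) : mixedDiff (vNC1 G) i j (insert c T) = 0 := by
  have : closedNbhd G c = Finset.univ := by
    refine Finset.eq_univ_of_forall fun y => ?_
    rcases eq_or_ne y c with rfl | hy
    · exact Finset.mem_insert_self _ _
    · exact Finset.mem_insert_of_mem (by simpa [nbhd] using hc y hy)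
  rw [mixedDiff_vNC1, Finset.biUnion_insert, this]
  simp [Finset.subset_iff]

lemma mixedDiff_vNC1_empty_neg_of_adj {c : α} (hc : ∀ y, y ≠ c → G.Adj c y) {i j : α}
    (hci : c ≠ i) (hcj : c ≠ j) :
    mixedDiff (vNC1 G) i j ∅ < 0 := by
  have hmem : c ∈ closedNbhd G i ∩ closedNbhd G j := by
    simp only [closedNbhd, nbhd, Finset.mem_inter, Finset.mem_insert, Finset.mem_filter,
      Finset.mem_univ, true_and]
    exact ⟨Or.inr (hc i hci.symm).symm, Or.inr (hc j hcj.symm).symm⟩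
  rw [mixedDiff_vNC1, Finset.biUnion_empty, Finset.sdiff_empty, neg_lt_zero, Nat.cast_pos]
  exact Finset.card_pos.2 ⟨c, hmem⟩

end Graph

end ReliabilityExtension

open ReliabilityExtension

lemma starGraph_adj {n : ℕ} {c x y : Fin n} :
    (starGraph n c).Adj x y ↔ x ≠ y ∧ (x = c ∨ y = c) := by
  simp [starGraph]

lemma starGraph_adj_perm {n : ℕ} {c : Fin n} (e : Equiv.Perm (Fin n)) (he : e c = c) (x y : Fin n) :
    (starGraph n c).Adj (e x) (e y) ↔ (starGraph n c).Adj x y := by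
  have hc (z : Fin n) : e z = c ↔ z = c := by simpa [he] using e.injective.eq_iff (a := z) (b := c)
  simp only [starGraph_adj, e.injective.ne_iff, hc]

theorem stmt_19 (n : ℕ) (hn : 3 ≤ n) (G : SimpleGraph (Fin n))
    (hG : G = ⊤ ∨ G = starGraph n ⟨0, by omega⟩)
    (p : Fin n → ℝ) (hp : ∀ i, p i ∈ Set.Icc (0 : ℝ) 1)
    (hp1 : 0 < p ⟨0, by omega⟩)
    (i j : Fin n) (hi : i ≠ ⟨0, by omega⟩) (hj : j ≠ ⟨0, by omega⟩) (hij : i ≠ j)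
    (hpij : p i = p j) :
    ∃ ε₀ > (0 : ℝ), ∀ ε ∈ Set.Icc (-ε₀) ε₀, ε ≠ 0 →
      shapley
          (relExt (Function.update (Function.update p j (p j + ε)) i (p i - ε)) (vNC1 G))
          ⟨0, by omega⟩ <
        shapley (relExt p (vNC1 G)) ⟨0, by omega⟩ := by
  have hswap : Equiv.swap i j ⟨0, by omega⟩ = ⟨0, by omega⟩ :=
    Equiv.swap_apply_of_ne_of_ne hi.symm hj.symm
  obtain ⟨hc, he⟩ : (∀ y, y ≠ ⟨0, by omega⟩ → G.Adj ⟨0, by omega⟩ y) ∧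
      ∀ x y, G.Adj (Equiv.swap i j x) (Equiv.swap i j y) ↔ G.Adj x y := by
    rcases hG with rfl | rfl
    · exact ⟨fun y hy => hy.symm, fun x y => by simp [(Equiv.swap i j).injective.ne_iff]⟩
    · exact ⟨fun y hy => starGraph_adj.2 ⟨hy.symm, Or.inl rfl⟩, starGraph_adj_perm _ hswap⟩
  refine ⟨1, one_pos, fun ε _ hε => ?_⟩
  -- `Function.update` and `Equiv.swap` in the statement use `instDecidableEqFin`, the lemmas
  -- above the classical instance.
  have key := shapley_relExt_pairUpdate_lt hp hij (Ne.symm hi) (Ne.symm hj) hp1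
    (mixedDiff_vNC1_insert_of_adj hc i j) (mixedDiff_vNC1_nonpos G i j)
    (mixedDiff_vNC1_empty_neg_of_adj hc hi.symm hj.symm)
    (fun T => by
      convert vNC1_image G ⟨Equiv.swap i j, he _ _⟩ T
      simp only [RelIso.coe_fn_mk]
      congr!)
    hpij hε
  convert key using 3
  funext k
  simp only [pairUpdate, Function.update_apply]
  split_ifs <;> simp_all
end
end
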